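/- Let 𝔤 be the 4-dimensional real Lie algebra e(2) ⊕ ℝ with basis e₁, e₂, e₃, e₄ and nonzero brackets [e₁,e₃] = e₂, [e₂,e₃] = −e₁, and let F be a 2-cocycle of 𝔤. Then F is nondegenerate (i.e. the only v ∈ 𝔤 with F(v,w) = 0 for all w ∈ 𝔤 is v = 0) if and only if F(e₁,e₂) · F(e₃,e₄) ≠ 0. In particular, since adding a 2-coboundary changes neither F(e₁,e₂) nor F(e₃,e₄), every 2-cocycle cohomologous to F is nondegenerate whenever F(e₁,e₂) · F(e₃,e₄) ≠ 0. -/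

import Mathlib

/-!
Nondegeneracy of `F` is the nonvanishing of the determinant of its Gram matrix in the basis
`e₁, …, e₄`, which is alternating, so its determinant is the square of its Pfaffian
`F₁₂F₃₄ - F₁₃F₂₄ + F₁₄F₂₃`. Since `e₄` is central and `e₂ = [e₁,e₃]`, `e₁ = -[e₂,e₃]`, the cocycle
identity gives `F₁₄ = F₂₄ = 0`, leaving the Pfaffian `F₁₂F₃₄`. A coboundary vanishes on
`(e₁, e₂)` and `(e₃, e₄)` because these brackets are zero.
-/

noncomputable section

/-- The Lie bracket of the Lie algebra `e(2) ⊕ ℝ` on `ℝ⁴`, in the basis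
`e₁ = e 0, e₂ = e 1, e₃ = e 2, e₄ = e 3` with nonzero brackets
`[e₁,e₃] = e₂`, `[e₂,e₃] = -e₁`. -/
def bra (x y : Fin 4 → ℝ) : Fin 4 → ℝ :=
  ![-(x 1 * y 2 - x 2 * y 1), x 0 * y 2 - x 2 * y 0, 0, 0]

/-- The standard basis `e₁, e₂, e₃, e₄` (indexed from `0`). -/
def e (a : Fin 4) : Fin 4 → ℝ := Pi.single a 1

/-- `F` is a 2-cocycle of `e(2) ⊕ ℝ` with values in `ℝ`. -/
def IsCocycle (F : (Fin 4 → ℝ) →ₗ[ℝ] (Fin 4 → ℝ) →ₗ[ℝ] ℝ) : Prop :=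
  ∀ x y z : Fin 4 → ℝ, F (bra x y) z + F (bra y z) x + F (bra z x) y = 0

theorem Matrix.det_fin_four_of_alternating {R : Type*} [CommRing R]
    (A : Matrix (Fin 4) (Fin 4) R) (hdiag : ∀ i, A i i = 0) (hskew : ∀ i j, A j i = -A i j) :
    A.det = (A 0 1 * A 2 3 - A 0 2 * A 1 3 + A 0 3 * A 1 2) ^ 2 := by
  have hA : A = !![0, A 0 1, A 0 2, A 0 3; -A 0 1, 0, A 1 2, A 1 3;
      -A 0 2, -A 1 2, 0, A 2 3; -A 0 3, -A 1 3, -A 2 3, 0] := by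
    ext i j
    fin_cases i <;> fin_cases j <;> first | rfl | exact hdiag _ | exact hskew _ _
  rw [hA]
  simp [Matrix.det_succ_row_zero, Fin.sum_univ_succ, Fin.succAbove_of_castSucc_lt,
    Fin.succAbove_of_lt_succ]
  ring

theorem bra_e_zero_e_one : bra (e 0) (e 1) = 0 := by
  funext k; fin_cases k <;> simp [bra, e]

theorem bra_e_zero_e_two : bra (e 0) (e 2) = e 1 := by
  funext k; fin_cases k <;> simp [bra, e]

theorem bra_e_one_e_two : bra (e 1) (e 2) = -e 0 := by
  funext k; fin_cases k <;> simp [bra, e]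

theorem bra_e_three_left (w : Fin 4 → ℝ) : bra (e 3) w = 0 := by
  funext k; fin_cases k <;> simp [bra, e]

theorem bra_e_three_right (w : Fin 4 → ℝ) : bra w (e 3) = 0 := by
  funext k; fin_cases k <;> simp [bra, e]

namespace IsCocycle

variable {F : (Fin 4 → ℝ) →ₗ[ℝ] (Fin 4 → ℝ) →ₗ[ℝ] ℝ}

theorem apply_bra_e_three (hF : IsCocycle F) (x y : Fin 4 → ℝ) : F (bra x y) (e 3) = 0 := by
  simpa [bra_e_three_left, bra_e_three_right] using hF x y (e 3)

theorem apply_e_zero_e_three (hF : IsCocycle F) : F (e 0) (e 3) = 0 := by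
  simpa [bra_e_one_e_two] using hF.apply_bra_e_three (e 1) (e 2)

theorem apply_e_one_e_three (hF : IsCocycle F) : F (e 1) (e 3) = 0 := by
  simpa [bra_e_zero_e_two] using hF.apply_bra_e_three (e 0) (e 2)

theorem det_toMatrix₂ (hFalt : F.IsAlt) (hF : IsCocycle F) :
    (LinearMap.toMatrix₂ (Pi.basisFun ℝ (Fin 4)) (Pi.basisFun ℝ (Fin 4)) F).det =
      (F (e 0) (e 1) * F (e 2) (e 3)) ^ 2 := by
  set M := LinearMap.toMatrix₂ (Pi.basisFun ℝ (Fin 4)) (Pi.basisFun ℝ (Fin 4)) F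
  have hM (i j : Fin 4) : M i j = F (e i) (e j) := by
    simp only [M, LinearMap.toMatrix₂_apply, Pi.basisFun_apply, e]
  rw [M.det_fin_four_of_alternating (fun i ↦ by rw [hM]; exact hFalt _)
    (fun i j ↦ by rw [hM, hM, hFalt.neg]), hM, hM, hM, hM, hM, hM, hF.apply_e_zero_e_three,
    hF.apply_e_one_e_three]
  ring

theorem separatingLeft_iff (hFalt : F.IsAlt) (hF : IsCocycle F) :
    F.SeparatingLeft ↔ F (e 0) (e 1) * F (e 2) (e 3) ≠ 0 := by
  rw [LinearMap.separatingLeft_iff_det_ne_zero (Pi.basisFun ℝ (Fin 4)),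
    hF.det_toMatrix₂ hFalt, pow_ne_zero_iff two_ne_zero]

end IsCocycle

theorem apply_eq_of_sub_eq_coboundary {F G : (Fin 4 → ℝ) →ₗ[ℝ] (Fin 4 → ℝ) →ₗ[ℝ] ℝ}
    {lam : (Fin 4 → ℝ) →ₗ[ℝ] ℝ} (hlam : ∀ x y, G x y - F x y = lam (bra x y))
    {x y : Fin 4 → ℝ} (hxy : bra x y = 0) : G x y = F x y := by
  simpa [hxy, sub_eq_zero] using hlam x y

/-- a 2-cocycle `F` of `e(2) ⊕ ℝ` is nondegenerate iff
`F(e₁,e₂) · F(e₃,e₄) ≠ 0`; in particular, in this case every 2-cocycle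
cohomologous to `F` is nondegenerate. -/
theorem cocycle_nondegenerate_iff
    (F : (Fin 4 → ℝ) →ₗ[ℝ] (Fin 4 → ℝ) →ₗ[ℝ] ℝ)
    (hFalt : ∀ x : Fin 4 → ℝ, F x x = 0) (hF : IsCocycle F) :
    ((∀ v : Fin 4 → ℝ, (∀ w : Fin 4 → ℝ, F v w = 0) → v = 0) ↔
        F (e 0) (e 1) * F (e 2) (e 3) ≠ 0) ∧
    (F (e 0) (e 1) * F (e 2) (e 3) ≠ 0 →
      ∀ G : (Fin 4 → ℝ) →ₗ[ℝ] (Fin 4 → ℝ) →ₗ[ℝ] ℝ,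
        (∀ x : Fin 4 → ℝ, G x x = 0) → IsCocycle G →
        (∃ lam : (Fin 4 → ℝ) →ₗ[ℝ] ℝ, ∀ x y : Fin 4 → ℝ, G x y - F x y = lam (bra x y)) →
        ∀ v : Fin 4 → ℝ, (∀ w : Fin 4 → ℝ, G v w = 0) → v = 0) := by
  refine ⟨hF.separatingLeft_iff hFalt, fun hFnd G hGalt hG ⟨lam, hlam⟩ ↦ ?_⟩
  have h01 : G (e 0) (e 1) = F (e 0) (e 1) := apply_eq_of_sub_eq_coboundary hlam bra_e_zero_e_one
  have h23 : G (e 2) (e 3) = F (e 2) (e 3) :=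
    apply_eq_of_sub_eq_coboundary hlam (bra_e_three_right _)
  exact (hG.separatingLeft_iff hGalt).2 (by rwa [h01, h23])
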